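/- arXiv:1608.06102 — 6 statements merged into one kernel-verified Lean document; each statement's English description precedes it below -/
import Mathlib

section
/- Let α ∈ (-1, -1/2) and set h(s) = 2α(1 - √(1+s)) - s/√(1+s). Then h(s) ≤ 0 for 0 ≤ s ≤ s_α and h(s) > 0 for s > s_α, where s_α = 1/(1+2α)² - 1 > 0. -/
/-!
With `t = √(1 + s) ≥ 1` and `s = t² - 1`, the function factors as
`h(s) = (t - 1) · (-(1 + 2α) t - 1) / t`. The first factor is positive for `s > 0`, and since
`1 + 2α < 0` the second changes sign exactly at `t = -1 / (1 + 2α)`, i.e. at `s = s_α`.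
-/

open Real

lemma mul_one_sub_sub_sq_sub_one_div (a t : ℝ) (ht : t ≠ 0) :
    a * (1 - t) - (t ^ 2 - 1) / t = (t - 1) * (-((1 + a) * t) - 1) / t := by
  field_simp
  ring

lemma mul_one_sub_sqrt_sub_div_sqrt (a s : ℝ) (hs : -1 < s) :
    a * (1 - √(1 + s)) - s / √(1 + s) =
      (√(1 + s) - 1) * (-((1 + a) * √(1 + s)) - 1) / √(1 + s) := by
  have hsq : √(1 + s) ^ 2 = 1 + s := sq_sqrt (by linarith)
  have hpos : 0 < √(1 + s) := sqrt_pos.mpr (by linarith)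
  rw [← mul_one_sub_sub_sq_sub_one_div a _ hpos.ne', hsq, add_sub_cancel_left]

lemma neg_mul_sqrt_sub_one_nonpos_iff {c : ℝ} (hc : c < 0) (u : ℝ) :
    -(c * √u) - 1 ≤ 0 ↔ u ≤ 1 / c ^ 2 := by
  have hinv : 0 ≤ -1 / c := div_nonneg_of_nonpos (by norm_num) hc.le
  calc -(c * √u) - 1 ≤ 0 ↔ √u ≤ -1 / c := by
        rw [le_div_iff_of_neg hc]; constructor <;> intro h <;> linarith
    _ ↔ u ≤ (-1 / c) ^ 2 := sqrt_le_left hinv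
    _ ↔ u ≤ 1 / c ^ 2 := by rw [div_pow, neg_one_sq]

theorem h_sign (α : ℝ) (hα₁ : -1 < α) (hα₂ : α < -(1/2)) :
    0 < 1 / (1 + 2*α)^2 - 1 ∧
    (∀ s : ℝ, 0 ≤ s → s ≤ 1 / (1 + 2*α)^2 - 1 →
      2*α * (1 - Real.sqrt (1 + s)) - s / Real.sqrt (1 + s) ≤ 0) ∧
    (∀ s : ℝ, 1 / (1 + 2*α)^2 - 1 < s →
      0 < 2*α * (1 - Real.sqrt (1 + s)) - s / Real.sqrt (1 + s)) := by
  have hc : 1 + 2*α < 0 := by linarith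
  have hs_α : 1 < 1 / (1 + 2*α)^2 := one_lt_one_div (by nlinarith) (by nlinarith)
  refine ⟨by linarith, fun s hs₀ hs => ?_, fun s hs => ?_⟩
  · rw [mul_one_sub_sqrt_sub_div_sqrt _ _ (by linarith)]
    have hroot : 0 ≤ √(1 + s) - 1 := by simp [one_le_sqrt, hs₀]
    have hlin := (neg_mul_sqrt_sub_one_nonpos_iff hc (1 + s)).mpr (by linarith)
    exact div_nonpos_of_nonpos_of_nonneg (mul_nonpos_of_nonneg_of_nonpos hroot hlin)
      (sqrt_nonneg _)
  · have hs₀ : 0 < s := by linarith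
    rw [mul_one_sub_sqrt_sub_div_sqrt _ _ (by linarith)]
    have hroot : 0 < √(1 + s) - 1 := by
      rw [sub_pos, lt_sqrt zero_le_one]; linarith
    have hlin := not_le.mp <| (neg_mul_sqrt_sub_one_nonpos_iff hc (1 + s)).not.mpr (by linarith)
    exact div_pos (mul_pos hroot hlin) (sqrt_pos.mpr (by linarith))
end

section
/- Let α ∈ (-1, -1/2) and ρ₀ = (-(1+2α)/3)^{3/2}. Then for all τ > 1, the cubic ω(τ) = 2ρ₀τ³ + (1+2α)τ² + 1 satisfies ω(τ) ≥ 0. -/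
/-! With `a = √(-(1 + 2α)/3)` one has `ρ₀ = a³` and `1 + 2α = -3a²`, so `ω(τ) = p(aτ)` for
`p(x) = 2x³ - 3x² + 1 = (x - 1)²(2x + 1)`: the choice of `ρ₀` makes `τ = 1/a` a double root of `ω`,
and `p` is nonnegative for `x ≥ -1/2`. -/

theorem two_mul_cube_sub_three_mul_sq_add_one_nonneg {x : ℝ} (hx : -(1 / 2) ≤ x) :
    0 ≤ 2 * x ^ 3 - 3 * x ^ 2 + 1 := by
  have factor : 2 * x ^ 3 - 3 * x ^ 2 + 1 = (x - 1) ^ 2 * (2 * x + 1) := by ring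
  rw [factor]
  exact mul_nonneg (sq_nonneg _) (by linarith)

theorem omega_nonneg_general (α : ℝ) (hα₂ : α < -(1/2))
    (ρ₀ : ℝ) (hρ₀ : ρ₀ = (-(1 + 2*α) / 3) ^ ((3:ℝ)/2)) (τ : ℝ) (hτ : 1 < τ) :
    0 ≤ 2*ρ₀*τ^3 + (1 + 2*α)*τ^2 + 1 := by
  have hc : 0 ≤ -(1 + 2*α) / 3 := by linarith
  set a := √(-(1 + 2*α) / 3)
  have hρ : ρ₀ = a ^ 3 := by
    rw [hρ₀, Real.rpow_div_two_eq_sqrt 3 hc]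
    norm_cast
  have hα : 1 + 2*α = -3 * a ^ 2 := by
    rw [Real.sq_sqrt hc]
    ring
  have haτ : -(1 / 2) ≤ a * τ := by
    have : 0 ≤ a * τ := mul_nonneg (Real.sqrt_nonneg _) (by linarith)
    linarith
  calc 0 ≤ 2 * (a * τ) ^ 3 - 3 * (a * τ) ^ 2 + 1 :=
        two_mul_cube_sub_three_mul_sq_add_one_nonneg haτ
    _ = 2*ρ₀*τ^3 + (1 + 2*α)*τ^2 + 1 := by
        rw [hρ, hα]
        ring

theorem omega_nonneg (α : ℝ) (hα₁ : -1 < α) (hα₂ : α < -(1/2))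
    (ρ₀ : ℝ) (hρ₀ : ρ₀ = (-(1 + 2*α) / 3) ^ ((3:ℝ)/2)) (τ : ℝ) (hτ : 1 < τ) :
    0 ≤ 2*ρ₀*τ^3 + (1 + 2*α)*τ^2 + 1 :=
  omega_nonneg_general α hα₂ ρ₀ hρ₀ τ hτ
end

section
/- Let α ∈ (-1, -1/2), ρ₀ = (-(1+2α)/3)^{3/2}, and h₀(s) = 2α(1-√(1+s)) - s/√(1+s) - ρ₀ s for s ≥ 0. Then h₀ is nonincreasing on [0,∞) and h₀(s) ≤ 0 for all s ≥ 0; consequently α(√(1+s)-1)² + s - s/√(1+s) ≤ [1 + α + (-(1+2α)/3)^{3/2}]·s for all s ≥ 0. -/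
/-!
Write `α = -(1 + 3w²)/2`, so that `ρ₀ = w³`, and put `a = √(1+s)`, `b = √(1+s')` for
`0 ≤ s ≤ s'`. Then `h₀(s) - h₀(s') = (b - a)(1/(ab) + w³(a + b) - 3w²)`, and the last factor
is nonnegative by AM-GM for the three numbers `x²y`, `xy²`, `1` with `x = wa`, `y = wb`.
Hence `h₀` is nonincreasing, so `h₀(s) ≤ h₀(0) = 0`, and the final inequality is `h₀(s) ≤ 0`
rewritten using `(√(1+s))² = 1 + s`.
-/

open Real Set

lemma three_mul_mul_le_mul_mul_add_add_one {x y : ℝ} (hx : 0 ≤ x) (hy : 0 ≤ y) :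
    3 * (x * y) ≤ x * y * (x + y) + 1 := by
  set m := √(x * y)
  have hm : 0 ≤ m := sqrt_nonneg _
  have hm2 : m ^ 2 = x * y := sq_sqrt (mul_nonneg hx hy)
  have hsum : 2 * m ≤ x + y := by nlinarith [sq_nonneg (x - y)]
  have hxy : 2 * m ^ 3 ≤ x * y * (x + y) := by
    rw [← hm2]; nlinarith [pow_nonneg hm 2]
  nlinarith [mul_nonneg (sq_nonneg (m - 1)) (by positivity : (0 : ℝ) ≤ 2 * m + 1)]

lemma antitoneOn_h0 {α ρ w : ℝ} (hw : 0 ≤ w) (hα : -(1 + 2 * α) = 3 * w ^ 2)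
    (hρ : ρ = w ^ 3) :
    AntitoneOn (fun s : ℝ => 2 * α * (1 - √(1 + s)) - s / √(1 + s) - ρ * s) (Ici 0) := by
  intro s hs s' hs' hss'
  simp only [mem_Ici] at hs hs'
  have ha : 0 < √(1 + s) := sqrt_pos.2 (by linarith)
  have hab : √(1 + s) ≤ √(1 + s') := sqrt_le_sqrt (by linarith)
  have hb : 0 < √(1 + s') := ha.trans_le hab
  have hs_eq : s = √(1 + s) ^ 2 - 1 := by rw [sq_sqrt (by linarith)]; ring
  have hs'_eq : s' = √(1 + s') ^ 2 - 1 := by rw [sq_sqrt (by linarith)]; ring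
  set a := √(1 + s)
  set b := √(1 + s')
  have amgm := three_mul_mul_le_mul_mul_add_add_one (mul_nonneg hw ha.le) (mul_nonneg hw hb.le)
  have hdiff : (2 * α * (1 - a) - s / a - ρ * s) - (2 * α * (1 - b) - s' / b - ρ * s')
      = (b - a) * ((w * a) * (w * b) * (w * a + w * b) + 1 - 3 * ((w * a) * (w * b)))
        / (a * b) := by
    rw [hs_eq, hs'_eq, hρ, show α = -(1 + 3 * w ^ 2) / 2 by linarith]
    field_simp
    ring
  dsimp only
  rw [← sub_nonneg, hdiff]
  exact div_nonneg (mul_nonneg (by linarith) (by linarith)) (by positivity)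

theorem h0_props_general (α : ℝ) (hα₂ : α < -(1/2))
    (ρ₀ : ℝ) (hρ₀ : ρ₀ = (-(1 + 2*α) / 3) ^ ((3:ℝ)/2)) :
    AntitoneOn (fun s : ℝ => 2*α * (1 - Real.sqrt (1 + s)) - s / Real.sqrt (1 + s) - ρ₀ * s)
      (Set.Ici 0) ∧
    (∀ s : ℝ, 0 ≤ s →
      2*α * (1 - Real.sqrt (1 + s)) - s / Real.sqrt (1 + s) - ρ₀ * s ≤ 0) ∧
    (∀ s : ℝ, 0 ≤ s →
      α * (Real.sqrt (1 + s) - 1) ^ 2 + s - s / Real.sqrt (1 + s)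
        ≤ (1 + α + (-(1 + 2*α) / 3) ^ ((3:ℝ)/2)) * s) := by
  have hc : 0 ≤ -(1 + 2 * α) / 3 := by linarith
  have hρw : ρ₀ = √(-(1 + 2 * α) / 3) ^ 3 := by
    rw [hρ₀, ← rpow_natCast, ← rpow_div_two_eq_sqrt _ hc]; norm_num
  have hanti := antitoneOn_h0 (α := α) (sqrt_nonneg _) (by rw [sq_sqrt hc]; ring) hρw
  have hnonpos : ∀ s : ℝ, 0 ≤ s →
      2 * α * (1 - √(1 + s)) - s / √(1 + s) - ρ₀ * s ≤ 0 := fun s hs => by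
    simpa using hanti self_mem_Ici hs hs
  refine ⟨hanti, hnonpos, fun s hs => ?_⟩
  rw [← hρ₀]
  linear_combination hnonpos s hs + α * sq_sqrt (show 0 ≤ 1 + s by linarith)

theorem h0_props (α : ℝ) (hα₁ : -1 < α) (hα₂ : α < -(1/2))
    (ρ₀ : ℝ) (hρ₀ : ρ₀ = (-(1 + 2*α) / 3) ^ ((3:ℝ)/2)) :
    AntitoneOn (fun s : ℝ => 2*α * (1 - Real.sqrt (1 + s)) - s / Real.sqrt (1 + s) - ρ₀ * s)
      (Set.Ici 0) ∧
    (∀ s : ℝ, 0 ≤ s →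
      2*α * (1 - Real.sqrt (1 + s)) - s / Real.sqrt (1 + s) - ρ₀ * s ≤ 0) ∧
    (∀ s : ℝ, 0 ≤ s →
      α * (Real.sqrt (1 + s) - 1) ^ 2 + s - s / Real.sqrt (1 + s)
        ≤ (1 + α + (-(1 + 2*α) / 3) ^ ((3:ℝ)/2)) * s) :=
  h0_props_general α hα₂ ρ₀ hρ₀
end

section
/- Let β ∈ (-1, 0) and g(s) = β·(s - ln(1+s)) + s²/(1+s) for s > 0. Then g(s) < (1 + β/2)²·s for all s > 0. -/
/-!
Write `L = log (1 + s)`. Multiplying the gap by `s` gives the identity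
`s * ((1 + β/2)^2 s - g(s)) = (β s / 2 + L)^2 + (s^2 / (1 + s) - L^2)`,
so it suffices that `L^2 < s^2 / (1 + s)`. With `t = L / 2` this is `t^2 < sinh t ^ 2`,
since `sinh (log x / 2) ^ 2 = (x - 1)^2 / (4 x)`.
-/

namespace Real

theorem sq_lt_sinh_sq {t : ℝ} (ht : t ≠ 0) : t ^ 2 < sinh t ^ 2 := by
  rw [sq_lt_sq, abs_sinh]
  exact self_lt_sinh_iff.mpr (abs_pos.mpr ht)

theorem sinh_half_log_sq {x : ℝ} (hx : 0 < x) :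
    sinh (log x / 2) ^ 2 = (x - 1) ^ 2 / (4 * x) := by
  have hcosh : cosh (2 * (log x / 2)) = (x + x⁻¹) / 2 := by
    rw [mul_div_cancel₀ _ two_ne_zero, cosh_log hx]
  rw [cosh_two_mul, cosh_sq] at hcosh
  field_simp at hcosh ⊢
  linear_combination hcosh

theorem log_sq_lt {x : ℝ} (hx : 0 < x) (hx₁ : x ≠ 1) : log x ^ 2 < (x - 1) ^ 2 / x := by
  have hlog : log x / 2 ≠ 0 := by simpa using log_ne_zero_of_pos_of_ne_one hx hx₁
  have := sq_lt_sinh_sq hlog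
  rw [sinh_half_log_sq hx] at this
  field_simp at this ⊢
  linarith

end Real

theorem g_lt_sat_general (β : ℝ) (s : ℝ) (hs : 0 < s) :
    β * (s - Real.log (1 + s)) + s^2 / (1 + s) < (1 + β/2)^2 * s := by
  set L := Real.log (1 + s)
  have h1s : 0 < 1 + s := by linarith
  have hL : L ^ 2 < s ^ 2 / (1 + s) := by
    simpa using Real.log_sq_lt h1s (by linarith)
  have key : s * ((1 + β/2)^2 * s - (β * (s - L) + s^2 / (1 + s)))
      = (β * s / 2 + L) ^ 2 + (s ^ 2 / (1 + s) - L ^ 2) := by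
    field_simp
    ring
  have hpos : 0 < s * ((1 + β/2)^2 * s - (β * (s - L) + s^2 / (1 + s))) := by
    rw [key]
    exact add_pos_of_nonneg_of_pos (sq_nonneg _) (sub_pos.mpr hL)
  exact sub_pos.mp ((pos_iff_pos_of_mul_pos hpos).mp hs)

theorem g_lt_sat (β : ℝ) (hβ₁ : -1 < β) (hβ₂ : β < 0) (s : ℝ) (hs : 0 < s) :
    β * (s - Real.log (1 + s)) + s^2 / (1 + s) < (1 + β/2)^2 * s :=
  g_lt_sat_general β s hs
end

section
/- Define f(s) = ((1 - 1/(1+s))·s)/(s - ln(1+s)) for s > 0. Then f is strictly decreasing on (0,∞). -/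
/-! Since `(1 - 1 / (1 + s)) * s = s ^ 2 / (1 + s)`, the derivative of `f` has the sign of
`2 s - (s + 2) log (1 + s)`, which is negative by the Padé bound `2 s / (s + 2) < log (1 + s)`. -/

open Real Set

lemma strictAntiOn_of_hasDerivAt_neg {D : Set ℝ} (hD : Convex ℝ D) (hD' : IsOpen D)
    {f f' : ℝ → ℝ} (hf : ∀ x ∈ D, HasDerivAt f (f' x) x) (hf' : ∀ x ∈ D, f' x < 0) :
    StrictAntiOn f D := by
  refine strictAntiOn_of_hasDerivWithinAt_neg (f' := f') hD
    (fun x hx ↦ (hf x hx).continuousAt.continuousWithinAt) ?_ ?_ <;> rw [hD'.interior_eq]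
  · exact fun x hx ↦ (hf x hx).hasDerivWithinAt
  · exact hf'

lemma log_one_add_lt_self {x : ℝ} (hx : -1 < x) (hx0 : x ≠ 0) : log (1 + x) < x := by
  simpa using log_lt_sub_one_of_pos (by linarith : 0 < 1 + x) (by simpa using hx0)

lemma hasDerivAt_f_sat {x : ℝ} (hx : -1 < x) (hx0 : x ≠ 0) :
    HasDerivAt (fun s : ℝ => ((1 - 1 / (1 + s)) * s) / (s - log (1 + s)))
      (x * (2 * x - (x + 2) * log (1 + x)) / ((1 + x) * (x - log (1 + x))) ^ 2) x := by
  have h1 : 1 + x ≠ 0 := by linarith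
  have hD : x - log (1 + x) ≠ 0 := (sub_pos.2 (log_one_add_lt_self hx hx0)).ne'
  have hN : HasDerivAt (fun s : ℝ => (1 - 1 / (1 + s)) * s)
      ((0 - (0 * (1 + x) - 1 * 1) / (1 + x) ^ 2) * x + (1 - 1 / (1 + x)) * 1) x :=
    ((hasDerivAt_const x 1).fun_sub
      ((hasDerivAt_const x 1).fun_div ((hasDerivAt_id' x).const_add 1) h1)).fun_mul
      (hasDerivAt_id' x)
  have hL : HasDerivAt (fun s : ℝ => s - log (1 + s)) (1 - 1 / (1 + x)) x :=
    (hasDerivAt_id' x).fun_sub (((hasDerivAt_id' x).const_add 1).log h1)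
  refine (hN.fun_div hL hD).congr_deriv ?_
  field_simp
  ring

theorem f_sat_strictAntiOn :
    StrictAntiOn (fun s : ℝ => ((1 - 1 / (1 + s)) * s) / (s - Real.log (1 + s)))
      (Set.Ioi 0) := by
  refine strictAntiOn_of_hasDerivAt_neg (convex_Ioi 0) isOpen_Ioi
    (fun x (hx : 0 < x) ↦ hasDerivAt_f_sat (by linarith) hx.ne') fun x (hx : 0 < x) ↦ ?_
  have hpade : 2 * x < (x + 2) * log (1 + x) := by
    have := lt_log_one_add_of_pos hx
    rwa [div_lt_iff₀ (by positivity), mul_comm (log _)] at this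
  have hD : 0 < x - log (1 + x) := sub_pos.2 (log_one_add_lt_self (by linarith) hx.ne')
  exact div_neg_of_neg_of_pos (mul_neg_of_pos_of_neg hx (by linarith)) (by positivity)
end

section
/- The function η(s) = 4 - 2((1+s)/s)·ln(1+s) - (2+s)/(1+s) satisfies η(s) < 0 for all s > 0. -/
/-!
Multiplying by `s (1 + s) > 0`, the claim becomes `2 s + 3 s² < 2 (1 + s)² log (1 + s)`.
The Padé lower bound `log (1 + s) > 2 s / (s + 2)` already gives this: it turns the right-hand
side into `4 s (1 + s)² / (s + 2)`, which exceeds the left-hand side by `s³ / (s + 2)`.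
-/

open Real

lemma two_mul_add_three_mul_sq_lt_log_one_add {s : ℝ} (hs : 0 < s) :
    2 * s + 3 * s ^ 2 < 2 * (1 + s) ^ 2 * log (1 + s) := by
  have hpade : 2 * s < log (1 + s) * (s + 2) :=
    (div_lt_iff₀ (by positivity)).1 (lt_log_one_add_of_pos hs)
  nlinarith [mul_pos (mul_pos hs hs) hs]

theorem eta_neg (s : ℝ) (hs : 0 < s) :
    4 - 2 * ((1 + s) / s) * Real.log (1 + s) - (2 + s) / (1 + s) < 0 := by
  have hs1 : 0 < 1 + s := by linarith
  have hcleared : 4 - 2 * ((1 + s) / s) * log (1 + s) - (2 + s) / (1 + s)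
      = (2 * s + 3 * s ^ 2 - 2 * (1 + s) ^ 2 * log (1 + s)) / (s * (1 + s)) := by
    field_simp
    ring
  rw [hcleared]
  exact div_neg_of_neg_of_pos (sub_neg.2 (two_mul_add_three_mul_sq_lt_log_one_add hs))
    (by positivity)
end
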